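/- arXiv:2408.00583 — 4 statements merged into one kernel-verified Lean document; each statement's English description precedes it below -/
import Mathlib

section
/- Let G be a directed acyclic graph on [n], and let M = (m_ij) be a matrix supported on the edges of G with all diagonal entries equal to -1/(2ζ) for some ζ > 0. If Σ solves the Lyapunov equation MΣ + ΣMᵀ + 2I = 0, then each entry satisfies the trek rule: σ_ij = Σ_T 2 ζ^{ℓ+r+1} binom(ℓ+r, ℓ) m_T, where the sum runs over all (ℓ,r)-treks T from i to j in G, and m_T is the product of the off-diagonal edge parameters m_e over the edges e of T. -/
open Matrix

/-- A trek between `i` and `j` in a directed graph `E` on `Fin n`: an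
`(ℓ,r)`-trek consists of two directed paths from a common top node, of lengths
`ℓ = left.length - 1` and `r = right.length - 1`, ending at `i` and `j`. -/
structure GTrek (n : ℕ) (E : Fin n → Fin n → Prop) (i j : Fin n) where
  left : List (Fin n)
  right : List (Fin n)
  left_ne : left ≠ []
  right_ne : right ≠ []
  left_chain : left.Chain' E
  right_chain : right.Chain' E
  same_top : left.head? = right.head?
  left_last : left.getLast? = some i
  right_last : right.getLast? = some j

/-- The product `∏ m_{v,u}` over the directed edges `u → v` along a path given
as a list of nodes. -/
def pathWeight {n : ℕ} (M : Matrix (Fin n) (Fin n) ℝ) (l : List (Fin n)) : ℝ :=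
  ((l.zip l.tail).map fun p => M p.2 p.1).prod

/-- The weight `2 ζ^{ℓ+r+1} binom(ℓ+r, ℓ) m_T` of a trek `T`, where the trek
monomial `m_T` is the product of the edge parameters over the edges of `T`. -/
noncomputable def trekWeight {n : ℕ} {E : Fin n → Fin n → Prop} {i j : Fin n}
    (M : Matrix (Fin n) (Fin n) ℝ) (ζ : ℝ) (T : GTrek n E i j) : ℝ :=
  2 * ζ ^ (T.left.length - 1 + (T.right.length - 1) + 1) *
    ((T.left.length - 1 + (T.right.length - 1)).choose (T.left.length - 1) : ℝ) *
    pathWeight M T.left * pathWeight M T.right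

/-!
Put `N = M + (2ζ)⁻¹ I`. It has zero diagonal and is supported on the edges of the DAG, so it is
nilpotent, and the Lyapunov equation becomes the fixed-point equation
`S = 2ζ I + ζ (N S + S Nᵀ)`. The operator `X ↦ ζ (N X + X Nᵀ)` is a sum of two commuting nilpotent
operators, so the Neumann series for `S` terminates and the binomial theorem gives
`S = ∑_{ℓ,r} 2 ζ^{ℓ+r+1} binom(ℓ+r, ℓ) N^ℓ (Nᵀ)^r`.
Finally `(N^ℓ (Nᵀ)^r)_{ij} = ∑_t (N^ℓ)_{it} (N^r)_{jt}` expands into a sum over pairs of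
directed paths of lengths `ℓ` and `r` from a common top `t` to `i` and `j`, that is, over
`(ℓ,r)`-treks; along edges `N` agrees with `M`, since a DAG has no loops.
-/

open Finset

theorem Module.End.eq_sum_pow_apply_of_eq_add {R V : Type*} [Semiring R] [AddCommGroup V]
    [Module R V] {f : Module.End R V} {K : ℕ} (hf : f ^ K = 0) {x c : V} (hx : x = c + f x) :
    x = ∑ k ∈ range K, (f ^ k) c := by
  have hc : (1 - f) x = c := by
    rwa [LinearMap.sub_apply, Module.End.one_apply, sub_eq_iff_eq_add]
  calc x = (1 - f ^ K) x := by rw [hf, sub_zero, Module.End.one_apply]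
    _ = ((∑ k ∈ range K, f ^ k) * (1 - f)) x := by rw [geom_sum_mul_neg]
    _ = ∑ k ∈ range K, (f ^ k) c := by rw [Module.End.mul_apply, hc, LinearMap.sum_apply]

theorem Finset.sum_range_sum_antidiagonal_eq_sum_range_product {M : Type*} [AddCommMonoid M]
    (K : ℕ) (f : ℕ × ℕ → M) (hf : ∀ p : ℕ × ℕ, K ≤ p.1 ∨ K ≤ p.2 → f p = 0) :
    ∑ k ∈ range (2 * K), ∑ p ∈ antidiagonal k, f p = ∑ p ∈ range K ×ˢ range K, f p := by
  rw [← sum_fiberwise_of_maps_to (g := fun p : ℕ × ℕ => p.1 + p.2) (t := range (2 * K))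
    (fun p hp => by simp only [mem_product, mem_range] at hp ⊢; omega)]
  refine sum_congr rfl fun k _ => (sum_subset (fun p hp => ?_) fun p hp hp' => hf p ?_).symm
  · simp only [mem_filter] at hp
    exact mem_antidiagonal.mpr hp.2
  · simp only [mem_filter, mem_product, mem_range, not_and_or, not_lt] at hp'
    have := mem_antidiagonal.mp hp
    omega

theorem eq_sum_pow_mul_mul_pow_of_eq_add {R A : Type*} [CommRing R] [Ring A] [Algebra R A]
    {N P S C : A} {K : ℕ} (hN : N ^ K = 0) (hP : P ^ K = 0) (ζ : R)
    (hS : S = C + ζ • (N * S + S * P)) :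
    S = ∑ p ∈ range K ×ˢ range K,
      (ζ ^ (p.1 + p.2) * (p.1 + p.2).choose p.1) • (N ^ p.1 * C * P ^ p.2) := by
  set L : Module.End R A := ζ • LinearMap.mulLeft R N
  set Rt : Module.End R A := ζ • LinearMap.mulRight R P
  have hLR : Commute L Rt := ((LinearMap.commute_mulLeft_right N P).smul_left ζ).smul_right ζ
  have hpow : ∀ l r, (L ^ l * Rt ^ r) C = (ζ ^ (l + r)) • (N ^ l * C * P ^ r) := by
    intro l r
    simp only [L, Rt, smul_pow, LinearMap.pow_mulLeft, LinearMap.pow_mulRight, Module.End.mul_apply,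
      LinearMap.smul_apply, LinearMap.mulLeft_apply, LinearMap.mulRight_apply, mul_smul_comm,
      smul_smul, pow_add, mul_assoc, mul_comm (ζ ^ r)]
  have hL : L ^ K = 0 := by simp [L, smul_pow, LinearMap.pow_mulLeft, hN]
  have hR : Rt ^ K = 0 := by simp [Rt, smul_pow, LinearMap.pow_mulRight, hP]
  have hS' : S = C + (L + Rt) S := by
    simpa [L, Rt, smul_add] using hS
  rw [Module.End.eq_sum_pow_apply_of_eq_add
    (hLR.add_pow_eq_zero_of_add_le_succ_of_pow_eq_zero hL hR (by omega : K + K ≤ 2 * K + 1)) hS',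
    ← sum_range_sum_antidiagonal_eq_sum_range_product]
  · refine sum_congr rfl fun k _ => ?_
    rw [hLR.add_pow', LinearMap.sum_apply]
    refine sum_congr rfl fun p hp => ?_
    rw [LinearMap.smul_apply, hpow, mem_antidiagonal.mp hp, ← Nat.cast_smul_eq_nsmul R, smul_smul,
      mul_comm]
  · rintro p (h | h) <;> simp [pow_eq_zero_of_le h hN, pow_eq_zero_of_le h hP]

section Walks

variable {n : ℕ} {E : Fin n → Fin n → Prop}

theorem pathWeight_cons_cons (M : Matrix (Fin n) (Fin n) ℝ) (a b : Fin n) (l : List (Fin n)) :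
    pathWeight M (a :: b :: l) = M b a * pathWeight M (b :: l) := by
  simp [pathWeight]

noncomputable def nodeLists (m : ℕ) (b a : Fin n) : Finset (List (Fin n)) :=
  (List.finite_length_eq (Fin n) (m + 1)).toFinset.filter
    fun l => l.head? = some b ∧ l.getLast? = some a

@[simp]
theorem mem_nodeLists {m : ℕ} {b a : Fin n} {l : List (Fin n)} :
    l ∈ nodeLists m b a ↔ l.length = m + 1 ∧ l.head? = some b ∧ l.getLast? = some a := by
  simp [nodeLists]

theorem nodeLists_zero (b a : Fin n) : nodeLists 0 b a = if a = b then {[b]} else ∅ := by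
  ext l
  rw [mem_nodeLists, List.length_eq_one_iff]
  split_ifs <;> aesop

theorem Matrix.pow_apply_eq_sum_pathWeight (N : Matrix (Fin n) (Fin n) ℝ) (m : ℕ) (a b : Fin n) :
    (N ^ m) a b = ∑ l ∈ nodeLists m b a, pathWeight N l := by
  induction m generalizing b with
  | zero =>
    rw [pow_zero, nodeLists_zero, one_apply]
    split_ifs <;> simp [pathWeight]
  | succ m ih =>
    rw [pow_succ, mul_apply]
    simp_rw [ih, sum_mul]
    rw [sum_sigma']
    -- the default `a` of `getD` is never used: the lists in `nodeLists (m + 1) b a` have a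
    -- nonempty tail
    refine sum_nbij' (fun x => b :: x.2) (fun l => ⟨l.tail.head?.getD a, l.tail⟩) ?_ ?_ ?_ ?_ ?_
    · rintro ⟨c, l⟩ hl
      simp only [mem_sigma, mem_univ, true_and, mem_nodeLists] at hl ⊢
      obtain ⟨hlen, -, hlast⟩ := hl
      refine ⟨by simp [hlen], rfl, ?_⟩
      rw [List.getLast?_cons, hlast]
      rfl
    · rintro (_ | ⟨x, _ | ⟨y, t⟩⟩) hl <;> simp_all
    · rintro ⟨c, l⟩ hl
      simp_all
    · rintro (_ | ⟨x, _ | ⟨y, t⟩⟩) hl <;> simp_all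
    · rintro ⟨c, l⟩ hl
      simp only [mem_sigma, mem_univ, true_and, mem_nodeLists] at hl
      obtain ⟨hlen, hhead, -⟩ := hl
      rcases l with _ | ⟨y, t⟩
      · simp at hlen
      · simp only [List.head?_cons, Option.some.injEq] at hhead
        rw [pathWeight_cons_cons, hhead, mul_comm]

theorem isChain_of_pathWeight_ne_zero {N : Matrix (Fin n) (Fin n) ℝ}
    (hN : ∀ a b, N a b ≠ 0 → E b a) {l : List (Fin n)} (hl : pathWeight N l ≠ 0) :
    l.IsChain E := by
  induction l with
  | nil => exact .nil
  | cons a t ih =>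
    cases t with
    | nil => exact .singleton a
    | cons b t =>
      rw [pathWeight_cons_cons] at hl
      exact .cons_cons (hN b a (left_ne_zero_of_mul hl)) (ih (right_ne_zero_of_mul hl))

theorem pathWeight_eq_of_isChain {M N : Matrix (Fin n) (Fin n) ℝ}
    (hMN : ∀ a b, E a b → M b a = N b a) {l : List (Fin n)} (hl : l.IsChain E) :
    pathWeight M l = pathWeight N l := by
  induction l with
  | nil => rfl
  | cons a t ih =>
    cases t with
    | nil => rfl
    | cons b t =>
      rw [List.isChain_cons_cons] at hl
      rw [pathWeight_cons_cons, pathWeight_cons_cons, hMN a b hl.1, ih hl.2]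

theorem List.IsChain.length_le_of_acyclic (hacyc : ∀ v, ¬ Relation.TransGen E v v)
    {l : List (Fin n)} (hl : l.IsChain E) : l.length ≤ n := by
  have hpw : l.Pairwise (Relation.TransGen E) :=
    List.isChain_iff_pairwise.mp (hl.imp fun _ _ => .single)
  have hnd : l.Nodup := hpw.imp fun h => by rintro rfl; exact hacyc _ h
  simpa using hnd.length_le_card

theorem Matrix.pow_eq_zero_of_acyclic (hacyc : ∀ v, ¬ Relation.TransGen E v v)
    {N : Matrix (Fin n) (Fin n) ℝ} (hN : ∀ a b, N a b ≠ 0 → E b a) : N ^ n = 0 := by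
  ext a b
  rw [pow_apply_eq_sum_pathWeight, zero_apply]
  refine sum_eq_zero fun l hl => by_contra fun hw => ?_
  have := (isChain_of_pathWeight_ne_zero hN hw).length_le_of_acyclic hacyc
  have := (mem_nodeLists.mp hl).1
  omega

end Walks

namespace GTrek

variable {n : ℕ} {E : Fin n → Fin n → Prop} {i j : Fin n}

theorem ext {T U : GTrek n E i j} (hl : T.left = U.left) (hr : T.right = U.right) : T = U := by
  cases T
  cases U
  subst hl hr
  rfl

theorem finite (hacyc : ∀ v, ¬ Relation.TransGen E v v) : Finite (GTrek n E i j) :=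
  have := (List.finite_length_le (Fin n) n).to_subtype
  Finite.of_injective
    (fun T => (⟨T.left, T.left_chain.length_le_of_acyclic hacyc⟩,
      ⟨T.right, T.right_chain.length_le_of_acyclic hacyc⟩) :
      GTrek n E i j → {l : List (Fin n) | l.length ≤ n} × {l : List (Fin n) | l.length ≤ n})
    fun _ _ h => ext (congrArg (·.1.1) h) (congrArg (·.2.1) h)

def top (T : GTrek n E i j) : Fin n := T.left.head T.left_ne

def lengths (T : GTrek n E i j) : ℕ × ℕ := (T.left.length - 1, T.right.length - 1)

theorem head?_left (T : GTrek n E i j) : T.left.head? = some T.top :=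
  List.head?_eq_some_head T.left_ne

theorem head?_right (T : GTrek n E i j) : T.right.head? = some T.top :=
  T.same_top ▸ T.head?_left

theorem trekWeight_eq (M : Matrix (Fin n) (Fin n) ℝ) (ζ : ℝ) (T : GTrek n E i j) :
    trekWeight M ζ T = 2 * ζ ^ (T.lengths.1 + T.lengths.2 + 1) *
      (T.lengths.1 + T.lengths.2).choose T.lengths.1 *
      (pathWeight M T.left * pathWeight M T.right) := by
  rw [trekWeight, mul_assoc]
  rfl

theorem lengths_mem (hacyc : ∀ v, ¬ Relation.TransGen E v v) (T : GTrek n E i j) :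
    T.lengths ∈ range n ×ˢ range n := by
  have := List.length_pos_iff.mpr T.left_ne
  have := List.length_pos_iff.mpr T.right_ne
  have := T.left_chain.length_le_of_acyclic hacyc
  have := T.right_chain.length_le_of_acyclic hacyc
  simp only [lengths, mem_product, mem_range]
  omega

variable [Fintype (GTrek n E i j)] {M N : Matrix (Fin n) (Fin n) ℝ}

theorem sum_pathWeight_mul_pathWeight_filter (hNE : ∀ a b, N a b ≠ 0 → E b a)
    (hMN : ∀ a b, E a b → M b a = N b a) (l r : ℕ) (t : Fin n) :
    ∑ T : GTrek n E i j with (T.lengths, T.top) = ((l, r), t),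
      pathWeight M T.left * pathWeight M T.right = (N ^ l) i t * (N ^ r) j t := by
  rw [pow_apply_eq_sum_pathWeight, pow_apply_eq_sum_pathWeight, sum_mul_sum, ← sum_product']
  refine sum_bij_ne_zero (fun T _ _ => (T.left, T.right)) ?_ ?_ ?_ ?_
  · intro T hT _
    simp only [mem_filter, mem_univ, true_and, Prod.mk.injEq, lengths] at hT
    obtain ⟨⟨hl, hr⟩, rfl⟩ := hT
    have := List.length_pos_iff.mpr T.left_ne
    have := List.length_pos_iff.mpr T.right_ne
    simp only [mem_product, mem_nodeLists, head?_left, head?_right, T.left_last, T.right_last,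
      and_true]
    omega
  · exact fun T _ _ U _ _ h => ext (congrArg Prod.fst h) (congrArg Prod.snd h)
  · rintro ⟨p, q⟩ hpq hw
    simp only [mem_product, mem_nodeLists] at hpq
    obtain ⟨⟨hpl, hpt, hpi⟩, hql, hqt, hqj⟩ := hpq
    have hp := isChain_of_pathWeight_ne_zero hNE (left_ne_zero_of_mul hw)
    have hq := isChain_of_pathWeight_ne_zero hNE (right_ne_zero_of_mul hw)
    have hp0 : p ≠ [] := List.ne_nil_of_length_pos (by omega)
    have hq0 : q ≠ [] := List.ne_nil_of_length_pos (by omega)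
    refine ⟨⟨p, q, hp0, hq0, hp, hq, hpt.trans hqt.symm, hpi, hqj⟩, ?_, ?_, rfl⟩
    · have : p.head hp0 = t := Option.some_inj.mp ((List.head?_eq_some_head hp0).symm.trans hpt)
      simp [lengths, top, hpl, hql, this]
    · rwa [pathWeight_eq_of_isChain hMN hp, pathWeight_eq_of_isChain hMN hq]
  · intro T _ _
    rw [pathWeight_eq_of_isChain hMN T.left_chain, pathWeight_eq_of_isChain hMN T.right_chain]

theorem sum_trekWeight (hacyc : ∀ v, ¬ Relation.TransGen E v v)
    (hNE : ∀ a b, N a b ≠ 0 → E b a) (hMN : ∀ a b, E a b → M b a = N b a) (ζ : ℝ) :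
    ∑ T : GTrek n E i j, trekWeight M ζ T = ∑ p ∈ range n ×ˢ range n,
      2 * ζ ^ (p.1 + p.2 + 1) * (p.1 + p.2).choose p.1 * (N ^ p.1 * Nᵀ ^ p.2) i j := by
  have hmaps : ∀ T ∈ (univ : Finset (GTrek n E i j)),
      (T.lengths, T.top) ∈ (range n ×ˢ range n) ×ˢ (univ : Finset (Fin n)) :=
    fun T _ => mem_product.mpr ⟨T.lengths_mem hacyc, mem_univ _⟩
  rw [← sum_fiberwise_of_maps_to hmaps, sum_product]
  refine sum_congr rfl fun p _ => ?_
  simp_rw [mul_apply, ← transpose_pow, transpose_apply, mul_sum]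
  refine sum_congr rfl fun t _ => ?_
  rw [← sum_pathWeight_mul_pathWeight_filter hNE hMN, mul_sum]
  refine sum_congr rfl fun T hT => ?_
  rw [trekWeight_eq, ((Prod.mk.injEq _ _ _ _).mp (mem_filter.mp hT).2).1]

end GTrek

theorem Matrix.eq_smul_one_add_smul_of_lyapunov {ι : Type*} [Fintype ι] [DecidableEq ι]
    {M S : Matrix ι ι ℝ} {ζ : ℝ} (hζ : ζ ≠ 0)
    (hLyap : M * S + S * Mᵀ + (2 : ℝ) • (1 : Matrix ι ι ℝ) = 0) :
    S = (2 * ζ) • 1 + ζ • ((M + (2 * ζ)⁻¹ • 1) * S + S * (M + (2 * ζ)⁻¹ • 1)ᵀ) := by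
  simp only [add_mul, mul_add, transpose_add, transpose_smul, transpose_one, Matrix.smul_mul,
    Matrix.mul_smul, Matrix.one_mul, Matrix.mul_one]
  linear_combination (norm := module) -ζ • hLyap - mul_inv_cancel₀ hζ • S

/-- Restricted trek rule: for a DAG `E`, a drift matrix `M` supported on the
edges of `E` with all diagonal entries `-1/(2ζ)`, any solution `Σ` of the
Lyapunov equation `MΣ + ΣMᵀ + 2I = 0` satisfies
`σ_ij = Σ_T 2 ζ^{ℓ+r+1} binom(ℓ+r,ℓ) m_T`, where the sum runs over all treks
`T` from `i` to `j`. -/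
theorem restricted_trek_rule {n : ℕ} (E : Fin n → Fin n → Prop)
    (hacyc : ∀ v : Fin n, ¬ Relation.TransGen E v v)
    (ζ : ℝ) (hζ : 0 < ζ)
    (M S : Matrix (Fin n) (Fin n) ℝ)
    (hsupp : ∀ a b : Fin n, a ≠ b → M a b ≠ 0 → E b a)
    (hdiag : ∀ a : Fin n, M a a = -1 / (2 * ζ))
    (hLyap : M * S + S * Mᵀ + (2 : ℝ) • (1 : Matrix (Fin n) (Fin n) ℝ) = 0)
    (i j : Fin n) :
    S i j = ∑' T : GTrek n E i j, trekWeight M ζ T := by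
  set N := M + (2 * ζ)⁻¹ • (1 : Matrix (Fin n) (Fin n) ℝ)
  have hNoff : ∀ a b, a ≠ b → N a b = M a b := fun a b h => by simp [N, one_apply_ne h]
  have hNE : ∀ a b, N a b ≠ 0 → E b a := by
    intro a b h
    obtain rfl | hab := eq_or_ne a b
    · simp [N, hdiag, div_eq_mul_inv] at h
    · exact hsupp a b hab (hNoff a b hab ▸ h)
  have hMN : ∀ a b, E a b → M b a = N b a := fun a b hab =>
    (hNoff b a fun h => hacyc a (by subst h; exact .single hab)).symm
  have hNn : N ^ n = 0 := pow_eq_zero_of_acyclic hacyc hNE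
  have hNtn : Nᵀ ^ n = 0 := by rw [← transpose_pow, hNn, transpose_zero]
  have := GTrek.finite hacyc (i := i) (j := j)
  let _ := Fintype.ofFinite (GTrek n E i j)
  rw [tsum_fintype, GTrek.sum_trekWeight hacyc hNE hMN,
    eq_sum_pow_mul_mul_pow_of_eq_add hNn hNtn ζ (eq_smul_one_add_smul_of_lyapunov hζ.ne' hLyap),
    Matrix.sum_apply]
  refine sum_congr rfl fun p _ => ?_
  simp only [Matrix.mul_smul, Matrix.smul_mul, Matrix.mul_one, Matrix.smul_apply, smul_eq_mul]
  ring
end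

section
/- Let G be a DAG with M supported on its edges and diagonal entries all equal to -1/(2ζ), ζ > 0, and let Σ solve MΣ + ΣMᵀ + 2I = 0. If i is a source node of G (no parents other than itself), then σ_ii = 2ζ. If i and k are two distinct source nodes, then σ_ik = 0. -/
/-! At a source node `i` the `i`-th row of `M` is `-1/(2ζ)` times the unit vector `eᵢ`, so for
sources `i` and `k` the `(i, k)` entry of `MΣ + ΣMᵀ + 2I = 0` collapses to
`-σ_ik / ζ + 2 δ_ik = 0`. -/

open Matrix

section RowOffDiagZero

variable {ι R : Type*} [Fintype ι]

theorem Matrix.mul_apply_of_row_offDiag_eq_zero [NonUnitalNonAssocSemiring R]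
    {M : Matrix ι ι R} {i : ι} (hM : ∀ b, b ≠ i → M i b = 0) (S : Matrix ι ι R) (k : ι) :
    (M * S) i k = M i i * S i k := by
  rw [mul_apply, Finset.sum_eq_single i (fun b _ hb => by rw [hM b hb, zero_mul])
    (fun h => absurd (Finset.mem_univ i) h)]

theorem Matrix.mul_transpose_apply_of_row_offDiag_eq_zero [NonUnitalNonAssocSemiring R]
    {M : Matrix ι ι R} {k : ι} (hM : ∀ b, b ≠ k → M k b = 0) (S : Matrix ι ι R) (i : ι) :
    (S * Mᵀ) i k = S i k * M k k := by
  rw [mul_apply, Finset.sum_eq_single k (fun b _ hb => by rw [transpose_apply, hM b hb, mul_zero])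
    (fun h => absurd (Finset.mem_univ k) h), transpose_apply]

theorem lyapunov_apply_of_rows_offDiag_eq_zero [DecidableEq ι] [CommRing R] {M S : Matrix ι ι R}
    (hLyap : M * S + S * Mᵀ + (2 : R) • (1 : Matrix ι ι R) = 0) {i k : ι}
    (hi : ∀ b, b ≠ i → M i b = 0) (hk : ∀ b, b ≠ k → M k b = 0) :
    (M i i + M k k) * S i k + 2 * (1 : Matrix ι ι R) i k = 0 := by
  have h := congrFun (congrFun hLyap i) k
  rw [Matrix.add_apply, Matrix.add_apply, mul_apply_of_row_offDiag_eq_zero hi,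
    mul_transpose_apply_of_row_offDiag_eq_zero hk, Matrix.smul_apply, smul_eq_mul,
    Matrix.zero_apply] at h
  simpa only [add_mul, mul_comm (S i k)] using h

end RowOffDiagZero

theorem source_node_entries_general {n : ℕ} (E : Fin n → Fin n → Prop)
    (ζ : ℝ)
    (M S : Matrix (Fin n) (Fin n) ℝ)
    (hsupp : ∀ a b : Fin n, a ≠ b → M a b ≠ 0 → E b a)
    (hdiag : ∀ a : Fin n, M a a = -1 / (2 * ζ))
    (hLyap : M * S + S * Mᵀ + (2 : ℝ) • (1 : Matrix (Fin n) (Fin n) ℝ) = 0)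
    (i : Fin n) (hi : ∀ a : Fin n, a ≠ i → ¬ E a i) :
    S i i = 2 * ζ ∧
      ∀ k : Fin n, k ≠ i → (∀ a : Fin n, a ≠ k → ¬ E a k) → S i k = 0 := by
  have hrow : ∀ s, (∀ a, a ≠ s → ¬ E a s) → ∀ b, b ≠ s → M s b = 0 :=
    fun s hs b hb => by_contra fun h => hs b hb (hsupp s b hb.symm h)
  have hentry : ∀ k, (∀ a, a ≠ k → ¬ E a k) →
      -1 / (2 * ζ) * S i k = -(1 : Matrix (Fin n) (Fin n) ℝ) i k := by
    intro k hk
    have h := lyapunov_apply_of_rows_offDiag_eq_zero hLyap (hrow i hi) (hrow k hk)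
    rw [hdiag, hdiag] at h
    linear_combination h / 2
  have hii : -1 / (2 * ζ) * S i i = -1 := by simpa using hentry i hi
  have hd : -1 / (2 * ζ) ≠ 0 := left_ne_zero_of_mul (by rw [hii]; norm_num)
  refine ⟨?_, fun k hki hk => ?_⟩
  · rw [eq_div_of_mul_eq hd ((mul_comm _ _).trans hii), div_div_eq_mul_div]
    ring
  · have h := hentry k hk
    rw [one_apply_ne hki.symm, neg_zero] at h
    exact (mul_eq_zero.mp h).resolve_left hd

/-- Source nodes in the Lyapunov model of a DAG: if `M` is supported on the
edges of a DAG `E` with diagonal entries `-1/(2ζ)` and `Σ` solves the Lyapunov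
equation `MΣ + ΣMᵀ + 2I = 0`, then `σ_ii = 2ζ` for any source node `i`
(a node with no parents other than itself), and `σ_ik = 0` for distinct
source nodes `i` and `k`. -/
theorem source_node_entries {n : ℕ} (E : Fin n → Fin n → Prop)
    (hacyc : ∀ v : Fin n, ¬ Relation.TransGen E v v)
    (ζ : ℝ) (hζ : 0 < ζ)
    (M S : Matrix (Fin n) (Fin n) ℝ)
    (hsupp : ∀ a b : Fin n, a ≠ b → M a b ≠ 0 → E b a)
    (hdiag : ∀ a : Fin n, M a a = -1 / (2 * ζ))
    (hLyap : M * S + S * Mᵀ + (2 : ℝ) • (1 : Matrix (Fin n) (Fin n) ℝ) = 0)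
    (i : Fin n) (hi : ∀ a : Fin n, a ≠ i → ¬ E a i) :
    S i i = 2 * ζ ∧
      ∀ k : Fin n, k ≠ i → (∀ a : Fin n, a ≠ k → ¬ E a k) → S i k = 0 :=
  source_node_entries_general E ζ M S hsupp hdiag hLyap i hi
end

section
/- Let G be a directed graph and G′ = (V′, E′) a subgraph of G. Fix nodes i, j ∈ V′ and a set K′ ⊆ V′ ∖ {i,j}. If there exists Σ′ in the Lyapunov model M_{G′} with det(Σ′_{iK′, jK′}) ≠ 0, then for every K ⊆ V(G) ∖ {i,j} with K ∩ V′ = K′, there exists Σ in the Lyapunov model M_G with det(Σ_{iK, jK}) ≠ 0. In particular, a conditional dependence i ⫫̸ j | K′ exhibited on a subgraph lifts to the full graph with any conditioning set restricting to K′. -/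
open Matrix

/-- A real square matrix is stable if all its (complex) eigenvalues have
strictly negative real part. -/
def IsStable {ι : Type*} [Fintype ι] [DecidableEq ι] (M : Matrix ι ι ℝ) : Prop :=
  ∀ μ ∈ spectrum ℂ (M.map (fun x => (x : ℂ))), μ.re < 0

/-- The minor of `S` with rows indexed by the finset `R` and columns by the
finset `C` (of equal cardinality), rows and columns taken in increasing
order. -/
noncomputable def finMinor {ι : Type*} [Fintype ι] [LinearOrder ι]
    (S : Matrix ι ι ℝ) (R C : Finset ι) (h : R.card = C.card) : ℝ :=
  (S.submatrix (fun a : Fin R.card => ((R.orderIsoOfFin rfl a : R) : ι))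
    (fun b : Fin R.card => ((C.orderIsoOfFin h.symm b : C) : ι))).det

/-! Extend the witness by the identity outside `V'`: with `M = diag(M', -I)` and
`Σ = diag(Σ', I)` on `V' ⊔ (V ∖ V')`, positive definiteness, stability, the support condition
and the Lyapunov equation all hold blockwise. Up to permuting rows and columns, the minor
`Σ_{iK,jK}` is `diag(Σ'_{iK',jK'}, I_{K ∖ V'})`, so its determinant is `± det Σ'_{iK',jK'}`. -/

theorem Matrix.PosDef.fromBlocks_zero {m l : Type*} [Fintype m] [Fintype l]
    {A : Matrix m m ℝ} {D : Matrix l l ℝ} (hA : A.PosDef) (hD : D.PosDef) :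
    (fromBlocks A 0 0 D).PosDef := by
  refine .of_dotProduct_mulVec_pos (hA.isHermitian.fromBlocks (by simp) hD.isHermitian)
    fun x hx => ?_
  rw [← Sum.elim_comp_inl_inr x, fromBlocks_mulVec]
  simp only [zero_mulVec, add_zero, zero_add, star_trivial, sumElim_dotProduct_sumElim,
    Sum.elim_comp_inl, Sum.elim_comp_inr]
  have hA' := hA.posSemidef.dotProduct_mulVec_nonneg (x ∘ Sum.inl)
  have hD' := hD.posSemidef.dotProduct_mulVec_nonneg (x ∘ Sum.inr)
  simp only [star_trivial] at hA' hD'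
  by_cases hl : x ∘ Sum.inl = 0
  · have hr : x ∘ Sum.inr ≠ 0 := fun hr =>
      hx (by rw [← Sum.elim_comp_inl_inr x, hl, hr, Sum.elim_zero_zero])
    have := hD.dotProduct_mulVec_pos hr
    simp only [star_trivial] at this
    linarith
  · have := hA.dotProduct_mulVec_pos hl
    simp only [star_trivial] at this
    linarith

theorem Matrix.fromBlocks_zero_submatrix_sumMap {l m n o l' m' n' o' α : Type*} [Zero α]
    (A : Matrix n l α) (D : Matrix o m α) (f : n' → n) (g : o' → o) (f' : l' → l)
    (g' : m' → m) :
    (fromBlocks A 0 0 D).submatrix (Sum.map f g) (Sum.map f' g') =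
      fromBlocks (A.submatrix f f') 0 0 (D.submatrix g g') := by
  ext (i | i) (j | j) <;> rfl

section Stability

variable {ι κ : Type*} [Fintype ι] [DecidableEq ι] [Fintype κ] [DecidableEq κ]

theorem isStable_iff_isRoot_charpoly {M : Matrix ι ι ℝ} :
    IsStable M ↔ ∀ μ : ℂ, (M.map (fun x => (x : ℂ))).charpoly.IsRoot μ → μ.re < 0 := by
  simp only [IsStable, mem_spectrum_iff_isRoot_charpoly]

theorem IsStable.reindex {M : Matrix ι ι ℝ} (hM : IsStable M) (e : ι ≃ κ) :
    IsStable (reindex e e M) := by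
  rw [isStable_iff_isRoot_charpoly] at hM ⊢
  rwa [reindex_apply, ← submatrix_map, ← reindex_apply, charpoly_reindex]

theorem IsStable.fromBlocks_zero {A : Matrix ι ι ℝ} {D : Matrix κ κ ℝ}
    (hA : IsStable A) (hD : IsStable D) : IsStable (fromBlocks A 0 0 D) := by
  rw [isStable_iff_isRoot_charpoly] at hA hD ⊢
  intro μ hμ
  rw [fromBlocks_map, Matrix.map_zero _ Complex.ofReal_zero, charpoly_fromBlocks_zero₁₂,
    Polynomial.root_mul] at hμ
  exact hμ.elim (hA μ) (hD μ)

theorem isStable_diagonal {d : ι → ℝ} (hd : ∀ i, d i < 0) : IsStable (diagonal d) := by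
  rw [isStable_iff_isRoot_charpoly, diagonal_map (by simp), charpoly_diagonal]
  intro μ hμ
  obtain ⟨i, -, hi⟩ := (Polynomial.isRoot_prod _ _ _).mp hμ
  rw [← Polynomial.root_X_sub_C.mp hi, Complex.ofReal_re]
  exact hd i

theorem isStable_neg_one : IsStable (-1 : Matrix ι ι ℝ) := by
  rw [← diagonal_one, diagonal_neg]
  exact isStable_diagonal fun _ => by norm_num

end Stability

section Lyapunov

variable {ι κ : Type*} [Fintype ι] [DecidableEq ι] [Fintype κ] [DecidableEq κ]

def SolvesLyapunov (M S : Matrix ι ι ℝ) : Prop :=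
  M * S + S * Mᵀ + (2 : ℝ) • (1 : Matrix ι ι ℝ) = 0

theorem SolvesLyapunov.reindex {M S : Matrix ι ι ℝ} (h : SolvesLyapunov M S) (e : ι ≃ κ) :
    SolvesLyapunov (reindex e e M) (reindex e e S) := by
  have := congrArg (reindexAlgEquiv ℝ ℝ e) h
  simp only [map_add, map_mul, map_smul, map_one, map_zero, coe_reindexAlgEquiv] at this
  rwa [SolvesLyapunov, transpose_reindex]

theorem SolvesLyapunov.fromBlocks_zero {A S : Matrix ι ι ℝ} {D T : Matrix κ κ ℝ}
    (hA : SolvesLyapunov A S) (hD : SolvesLyapunov D T) :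
    SolvesLyapunov (fromBlocks A 0 0 D) (fromBlocks S 0 0 T) := by
  rw [SolvesLyapunov, fromBlocks_transpose, fromBlocks_multiply, fromBlocks_multiply,
    ← fromBlocks_one, fromBlocks_smul, fromBlocks_add, fromBlocks_add]
  simp only [Matrix.mul_zero, Matrix.zero_mul, add_zero, zero_add, transpose_zero,
    smul_zero]
  rw [hA, hD, Matrix.fromBlocks_zero]

theorem solvesLyapunov_neg_one_one : SolvesLyapunov (-1 : Matrix ι ι ℝ) 1 := by
  rw [SolvesLyapunov]
  simp only [transpose_neg, transpose_one, mul_neg, mul_one, two_smul]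
  abel

end Lyapunov

theorem abs_finMinor_eq_abs_det_submatrix {ι κ : Type*} [Fintype ι] [LinearOrder ι]
    [Fintype κ] [DecidableEq κ] (S : Matrix ι ι ℝ) {R C : Finset ι} (h : R.card = C.card)
    {r c : κ → ι}
    (hr : Function.Injective r) (hc : Function.Injective c)
    (hrR : Set.range r = R) (hcC : Set.range c = C) :
    |finMinor S R C h| = |(S.submatrix r c).det| := by
  let σ : κ ≃ Fin R.card := (Equiv.ofInjective r hr).trans
    ((Equiv.setCongr hrR).trans (R.orderIsoOfFin rfl).symm.toEquiv)
  let τ : κ ≃ Fin R.card := (Equiv.ofInjective c hc).trans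
    ((Equiv.setCongr hcC).trans (C.orderIsoOfFin h.symm).symm.toEquiv)
  have hS : S.submatrix r c = (S.submatrix (fun a => ((R.orderIsoOfFin rfl a : R) : ι))
      (fun b => ((C.orderIsoOfFin h.symm b : C) : ι))).submatrix σ τ := by
    ext x y
    simp only [submatrix_apply, σ, τ, OrderIso.toEquiv_symm, Equiv.coe_trans,
      OrderIso.coe_symm_toEquiv, Function.comp_apply, OrderIso.apply_symm_apply]
    rfl
  rw [hS, abs_det_submatrix_equiv_equiv]
  rfl

section Extension

variable {ι : Type*} (p : ι → Prop) [DecidablePred p]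

theorem sumCompl_comp_sumMap {α β : Type*} (f : α → {x // p x}) (g : β → {x // ¬p x}) :
    Equiv.sumCompl p ∘ Sum.map f g = Sum.elim (Subtype.val ∘ f) (Subtype.val ∘ g) := by
  funext x
  cases x <;> rfl

theorem range_sumElim_val_orderIsoOfFin [LinearOrder ι] {β : Type*}
    {R' : Finset {x // p x}} {R : Finset ι} (hR : ∀ v, v ∈ R' ↔ ↑v ∈ R) {k : ℕ}
    (hk : R'.card = k) {g : β → ι} (hg : Set.range g = {x | x ∈ R ∧ ¬p x}) :
    Set.range (Sum.elim (fun a => ((R'.orderIsoOfFin hk a : {x // p x}) : ι)) g) = R := by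
  ext x
  simp only [Set.Sum.elim_range, Set.mem_union, hg, Set.mem_range, Set.mem_ofPred_eq,
    Finset.mem_coe]
  constructor
  · rintro (⟨a, rfl⟩ | hx)
    · exact (hR _).1 (R'.orderIsoOfFin hk a).2
    · exact hx.1
  · intro hx
    by_cases hp : p x
    · exact .inl ⟨(R'.orderIsoOfFin hk).symm ⟨⟨x, hp⟩, (hR _).2 hx⟩, by simp⟩
    · exact .inr ⟨hx, hp⟩

theorem reindex_sumCompl_fromBlocks_ne_zero {R : Type*} [Zero R]
    {A : Matrix {x // p x} {x // p x} R} {D : Matrix {x // ¬p x} {x // ¬p x} R} (hD : D.IsDiag)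
    {a b : ι} (hab : a ≠ b)
    (h : reindex (Equiv.sumCompl p) (Equiv.sumCompl p) (fromBlocks A 0 0 D) a b ≠ 0) :
    ∃ a' b' : {x // p x}, ↑a' = a ∧ ↑b' = b ∧ A a' b' ≠ 0 := by
  obtain ⟨x, rfl⟩ := (Equiv.sumCompl p).surjective a
  obtain ⟨y, rfl⟩ := (Equiv.sumCompl p).surjective b
  rw [reindex_apply, submatrix_apply, Equiv.symm_apply_apply, Equiv.symm_apply_apply] at h
  rcases x with x | x <;> rcases y with y | y
  · exact ⟨x, y, rfl, rfl, h⟩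
  · exact absurd rfl h
  · exact absurd rfl h
  · exact absurd (hD fun hxy => hab (by rw [hxy])) h

theorem abs_finMinor_reindex_sumCompl_fromBlocks_one [Fintype ι] [LinearOrder ι]
    (A : Matrix {x // p x} {x // p x} ℝ) {R' C' : Finset {x // p x}} (h' : R'.card = C'.card)
    {R C : Finset ι} (h : R.card = C.card) (hR : ∀ v, v ∈ R' ↔ ↑v ∈ R)
    (hC : ∀ v, v ∈ C' ↔ ↑v ∈ C) (hRC : ∀ x, ¬p x → (x ∈ R ↔ x ∈ C)) :
    |finMinor (reindex (Equiv.sumCompl p) (Equiv.sumCompl p) (fromBlocks A 0 0 1)) R C h| =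
      |finMinor A R' C' h'| := by
  let e := Equiv.sumCompl p
  let r₁ : Fin R'.card → {x // p x} := fun a => R'.orderIsoOfFin rfl a
  let c₁ : Fin R'.card → {x // p x} := fun b => C'.orderIsoOfFin h'.symm b
  let rL : {x // x ∈ R ∧ ¬p x} → {x // ¬p x} := fun x => ⟨x, x.2.2⟩
  have hr₁ : Function.Injective r₁ :=
    Subtype.val_injective.comp (R'.orderIsoOfFin rfl).injective
  have hc₁ : Function.Injective c₁ :=
    Subtype.val_injective.comp (C'.orderIsoOfFin h'.symm).injective
  have hrL : Function.Injective rL := fun x y hxy => Subtype.ext (congrArg Subtype.val hxy :)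
  have hrange : Set.range (Subtype.val ∘ rL) = {x | x ∈ R ∧ ¬p x} := Subtype.range_coe
  have hrR : Set.range (e ∘ Sum.map r₁ rL) = R := by
    rw [sumCompl_comp_sumMap]
    exact range_sumElim_val_orderIsoOfFin p hR rfl hrange
  have hcC : Set.range (e ∘ Sum.map c₁ rL) = C := by
    rw [sumCompl_comp_sumMap]
    refine range_sumElim_val_orderIsoOfFin p hC h'.symm (hrange.trans ?_)
    ext x
    simp only [Set.mem_ofPred_eq]
    exact and_congr_left (hRC x)
  rw [abs_finMinor_eq_abs_det_submatrix _ h (e.injective.comp (hr₁.sumMap hrL))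
    (e.injective.comp (hc₁.sumMap hrL)) hrR hcC, reindex_apply, submatrix_submatrix]
  simp only [e, ← Function.comp_assoc, Equiv.symm_comp_self, Function.id_comp]
  rw [fromBlocks_zero_submatrix_sumMap, submatrix_one _ hrL,
    det_fromBlocks_zero₂₁, det_one, mul_one]
  rfl

end Extension

/-- Lifting a conditional dependence from a subgraph: if the Lyapunov model of
a subgraph `G'` (on vertex set `V'`, edge set `E'` contained in `G`) contains a
matrix `Σ'` with `det Σ'_{iK',jK'} ≠ 0`, then for every `K` with
`K ∩ V' = K'`, the Lyapunov model of `G` contains a matrix `Σ` with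
`det Σ_{iK,jK} ≠ 0`. -/
theorem subgraph_dependence_lifts {n : ℕ} (G : Fin n → Fin n → Prop)
    (V' : Finset (Fin n)) (E' : Fin n → Fin n → Prop)
    (hsub : ∀ a b : Fin n, E' a b → G a b ∧ a ∈ V' ∧ b ∈ V')
    (i j : ↥V')
    (K' : Finset ↥V') (hiK' : i ∉ K') (hjK' : j ∉ K')
    (hdep : ∃ S' : Matrix ↥V' ↥V' ℝ, S'.PosDef ∧
      (∃ M' : Matrix ↥V' ↥V' ℝ, IsStable M' ∧
        (∀ a b : ↥V', a ≠ b → M' a b ≠ 0 → E' (b : Fin n) (a : Fin n)) ∧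
        M' * S' + S' * M'ᵀ + (2 : ℝ) • (1 : Matrix ↥V' ↥V' ℝ) = 0) ∧
      finMinor S' (insert i K') (insert j K')
        (by rw [Finset.card_insert_of_notMem hiK', Finset.card_insert_of_notMem hjK']) ≠ 0)
    (K : Finset (Fin n)) (hiK : (i : Fin n) ∉ K) (hjK : (j : Fin n) ∉ K)
    (hKV' : ∀ v : ↥V', v ∈ K' ↔ (v : Fin n) ∈ K) :
    ∃ S : Matrix (Fin n) (Fin n) ℝ, S.PosDef ∧
      (∃ M : Matrix (Fin n) (Fin n) ℝ, IsStable M ∧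
        (∀ a b : Fin n, a ≠ b → M a b ≠ 0 → G b a) ∧
        M * S + S * Mᵀ + (2 : ℝ) • (1 : Matrix (Fin n) (Fin n) ℝ) = 0) ∧
      finMinor S (insert (i : Fin n) K) (insert (j : Fin n) K)
        (by rw [Finset.card_insert_of_notMem hiK, Finset.card_insert_of_notMem hjK]) ≠ 0 := by
  obtain ⟨S', hS', ⟨M', hM', hM'E, hlyap⟩, hminor⟩ := hdep
  let e := Equiv.sumCompl (· ∈ V')
  have hM'S' : SolvesLyapunov M' S' := hlyap
  refine ⟨reindex e e (fromBlocks S' 0 0 1), (hS'.fromBlocks_zero PosDef.one).submatrix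
      e.symm.injective, ⟨reindex e e (fromBlocks M' 0 0 (-1)),
      (hM'.fromBlocks_zero isStable_neg_one).reindex e, ?_,
      (hM'S'.fromBlocks_zero solvesLyapunov_neg_one_one).reindex e⟩, ?_⟩
  · intro a b hab hM
    obtain ⟨a, b, rfl, rfl, hM'ab⟩ :=
      reindex_sumCompl_fromBlocks_ne_zero _ isDiag_one.neg hab hM
    exact (hsub _ _ (hM'E a b (fun h => hab (congrArg _ h)) hM'ab)).1
  · have hmem : ∀ v k : ↥V', v ∈ insert k K' ↔ ↑v ∈ insert (k : Fin n) K := by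
      simp only [Finset.mem_insert, Subtype.ext_iff, hKV', implies_true]
    have houtside : ∀ x ∉ V', x ∈ insert (i : Fin n) K ↔ x ∈ insert (j : Fin n) K := by
      intro x hx
      simp only [Finset.mem_insert, ne_of_mem_of_not_mem i.2 hx |>.symm,
        ne_of_mem_of_not_mem j.2 hx |>.symm, false_or]
    have hcard : (insert i K').card = (insert j K').card := by
      rw [Finset.card_insert_of_notMem hiK', Finset.card_insert_of_notMem hjK']
    rwa [← abs_ne_zero, abs_finMinor_reindex_sumCompl_fromBlocks_one _ S' hcard _ (hmem · i)
      (hmem · j) houtside, abs_ne_zero]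
end

section
/- Let T be a directed path 1 → 2 → ... → n (n ≥ 2), and let Σ(ζ) be the matrix whose (a,b) entry for a ≤ b is a polynomial whose highest-degree term equals binom(a+b-2, a-1) ζ^{a+b-2} (coming from the unique longest trek from a to b through the source node 1). Then the determinant of the submatrix Σ(ζ)_{{1,...,n-1},{2,...,n}}, as a polynomial in ζ, has non-zero leading term; in particular this determinant is a non-zero polynomial, so for all but finitely many ζ the minor is non-zero. -/
open Matrix Polynomial Finset

/-- The covariance matrix `Σ(ζ)` of the directed path `0 → 1 → ⋯ → n-1`
(a trek with top node `0`): the `(i,j)` entry is `Σ_T binom(ℓ+r, ℓ) ζ^{ℓ+r}`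
summed over all treks from `i` to `j`; treks correspond to common ancestors
`s ≤ min i j` with branch lengths `ℓ = i - s`, `r = j - s`, and the highest
degree term of the `(a,b)` entry (for `a ≤ b`) is `binom(a+b, a) ζ^{a+b}`
(0-indexed), coming from the unique longest trek through the source `0`. -/
noncomputable def pathSigma (n : ℕ) : Matrix (Fin n) (Fin n) (Polynomial ℝ) :=
  Matrix.of fun i j =>
    ∑ s : Fin n,
      if (s : ℕ) ≤ (i : ℕ) ∧ (s : ℕ) ≤ (j : ℕ) then
        Polynomial.C ((((i : ℕ) - (s : ℕ)) + ((j : ℕ) - (s : ℕ))).choose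
            ((i : ℕ) - (s : ℕ)) : ℝ) *
          Polynomial.X ^ (((i : ℕ) - (s : ℕ)) + ((j : ℕ) - (s : ℕ)))
      else 0

/-!
Entry `(a, b + 1)` of the minor has degree at most `a + (b + 1)`, so every term of the
Leibniz expansion has degree at most `∑ a + ∑ (b + 1) = (n - 1)²`, and the coefficient in that
degree is the determinant of the matrix of top coefficients `binom(a + b + 1, a)`. By
Vandermonde's identity this matrix is the product of the unitriangular matrices
`(binom(a + 1, j + 1))` and `(binom(b, j))`, so its determinant is `1`.
-/

namespace Polynomial

variable {R ι : Type*} [CommSemiring R]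

theorem coeff_prod_sum_of_natDegree_le (s : Finset ι) (f : ι → R[X]) (d : ι → ℕ)
    (h : ∀ i ∈ s, (f i).natDegree ≤ d i) :
    (∏ i ∈ s, f i).coeff (∑ i ∈ s, d i) = ∏ i ∈ s, (f i).coeff (d i) := by
  induction s using Finset.cons_induction with
  | empty => simp
  | cons a s ha ih =>
    have hs : ∀ i ∈ s, (f i).natDegree ≤ d i := fun i hi => h i (mem_cons_of_mem hi)
    rw [prod_cons, sum_cons, prod_cons, coeff_mul_add_eq_of_natDegree_le (h a (mem_cons_self a s))
      ((natDegree_prod_le _ _).trans (sum_le_sum hs)), ih hs]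

end Polynomial

theorem Nat.sum_range_choose_add_mul_choose (a b k : ℕ) :
    ∑ j ∈ range (a + 1), (a + k).choose (j + k) * b.choose j = (a + b + k).choose a := by
  rw [show a + b + k = b + (a + k) by ring, Nat.add_choose_eq,
    Nat.sum_antidiagonal_eq_sum_range_succ_mk]
  refine sum_congr rfl fun j hj => ?_
  have hj : j ≤ a := mem_range_succ_iff.mp hj
  rw [mul_comm, Nat.choose_symm_of_eq_add (show a + k = (j + k) + (a - j) by omega)]

theorem Finset.sum_range_add_sum_range_succ_eq_sq (m : ℕ) :
    ∑ i ∈ range m, i + ∑ i ∈ range m, (i + 1) = m ^ 2 := by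
  induction m with
  | zero => simp
  | succ m ih => rw [sum_range_succ, sum_range_succ, add_add_add_comm, ih]; ring

theorem Equiv.Perm.sum_comp_add {ι : Type*} [Fintype ι] (σ : Equiv.Perm ι) (r c : ι → ℕ) :
    ∑ i, (r (σ i) + c i) = ∑ i, r i + ∑ i, c i := by
  rw [sum_add_distrib, Equiv.sum_comp σ r]

namespace Matrix

theorem det_choose_add_add_eq_one (R : Type*) [CommRing R] (m k : ℕ) :
    (of fun a b : Fin m => (((a + b + k : ℕ).choose a : ℕ) : R)).det = 1 := by
  set L : Matrix (Fin m) (Fin m) R := of fun a j => (((a + k : ℕ).choose (j + k) : ℕ) : R)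
  set U : Matrix (Fin m) (Fin m) R := of fun j b => (((b : ℕ).choose j : ℕ) : R)
  have hLU : (of fun a b : Fin m => (((a + b + k : ℕ).choose a : ℕ) : R)) = L * U := by
    ext a b
    have hvanish : ∀ j ∈ range m, j ∉ range (a + 1) →
        (a + k).choose (j + k) * (b : ℕ).choose j = 0 := fun j _ hj => by
      rw [Nat.choose_eq_zero_of_lt (by simp at hj; omega), zero_mul]
    simp only [mul_apply, L, U, of_apply, ← Nat.cast_mul, ← Nat.cast_sum,
      Fin.sum_univ_eq_sum_range (fun j => (a + k).choose (j + k) * (b : ℕ).choose j),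
      ← sum_subset (range_subset_range.mpr a.isLt) hvanish, Nat.sum_range_choose_add_mul_choose]
  have hL : L.det = 1 := by
    rw [det_of_isLowerTriangular L fun i j hij => ?_]
    · simp [L]
    · have hij : (i : ℕ) + k < j + k := by simpa using hij
      simp only [L, of_apply, Nat.choose_eq_zero_of_lt hij, Nat.cast_zero]
  have hU : U.det = 1 := by
    rw [det_of_isUpperTriangular fun i j hij => ?_]
    · simp [U]
    · have hij : (j : ℕ) < i := hij
      simp only [U, of_apply, Nat.choose_eq_zero_of_lt hij, Nat.cast_zero]
  rw [hLU, det_mul, hL, hU, mul_one]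

section PolynomialEntries

variable {ι R : Type*} [Fintype ι] [DecidableEq ι] [CommRing R]
  {M : Matrix ι ι R[X]} {r c : ι → ℕ}

theorem natDegree_det_le_of_natDegree_le (h : ∀ i j, (M i j).natDegree ≤ r i + c j) :
    M.det.natDegree ≤ ∑ i, r i + ∑ j, c j := by
  rw [det_apply]
  refine natDegree_sum_le_of_forall_le _ _ fun σ _ => ?_
  rw [Units.smul_def, ← Equiv.Perm.sum_comp_add σ r c]
  exact (natDegree_smul_le _ _).trans
    ((natDegree_prod_le _ _).trans (sum_le_sum fun i _ => h (σ i) i))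

theorem coeff_det_of_natDegree_le (h : ∀ i j, (M i j).natDegree ≤ r i + c j) :
    M.det.coeff (∑ i, r i + ∑ j, c j) = (of fun i j => (M i j).coeff (r i + c j)).det := by
  simp only [det_apply, finsetSum_coeff, coeff_smul, of_apply]
  refine sum_congr rfl fun σ _ => ?_
  rw [← Equiv.Perm.sum_comp_add σ r c,
    coeff_prod_sum_of_natDegree_le _ _ _ fun i _ => h (σ i) i]

theorem natDegree_det_eq_of_natDegree_le (h : ∀ i j, (M i j).natDegree ≤ r i + c j)
    (h0 : (of fun i j => (M i j).coeff (r i + c j)).det ≠ 0) :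
    M.det.natDegree = ∑ i, r i + ∑ j, c j :=
  (natDegree_det_le_of_natDegree_le h).antisymm
    (le_natDegree_of_ne_zero (by rwa [coeff_det_of_natDegree_le h]))

theorem leadingCoeff_det_eq_of_natDegree_le (h : ∀ i j, (M i j).natDegree ≤ r i + c j)
    (h0 : (of fun i j => (M i j).coeff (r i + c j)).det ≠ 0) :
    M.det.leadingCoeff = (of fun i j => (M i j).coeff (r i + c j)).det := by
  rw [leadingCoeff, natDegree_det_eq_of_natDegree_le h h0, coeff_det_of_natDegree_le h]

end PolynomialEntries

end Matrix

theorem natDegree_pathSigma_apply_le (n : ℕ) (i j : Fin n) :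
    (pathSigma n i j).natDegree ≤ i + j := by
  simp only [pathSigma, of_apply]
  refine natDegree_sum_le_of_forall_le _ _ fun s _ => ?_
  split
  · exact (natDegree_C_mul_X_pow_le _ _).trans (by omega)
  · simp

theorem coeff_pathSigma_apply (n : ℕ) (i j : Fin n) :
    (pathSigma n i j).coeff (i + j) = (((i + j : ℕ).choose i : ℕ) : ℝ) := by
  simp only [pathSigma, of_apply, finsetSum_coeff]
  rw [sum_eq_single_of_mem ⟨0, i.pos⟩ (mem_univ _) fun s _ hs => ?_]
  · simp [coeff_X_pow]
  · have hs : 0 < (s : ℕ) := Nat.pos_of_ne_zero fun h => hs (Fin.ext h)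
    split
    · rw [coeff_C_mul, coeff_X_pow, if_neg (by omega), mul_zero]
    · simp

/-- For the directed path `0 → 1 → ⋯ → n-1`, the minor of `Σ(ζ)` with rows
`{0,…,n-2}` and columns `{1,…,n-1}` has non-zero leading term: its leading
coefficient is `1` (the determinant of the Pascal matrix) and its degree is
`(n-1)²`; in particular it is a non-zero polynomial and vanishes for only
finitely many values of `ζ`. -/
theorem path_minor_leading_term (n : ℕ) :
    (((pathSigma n).submatrix
        (fun a : Fin (n - 1) => (⟨(a : ℕ), by have := a.isLt; omega⟩ : Fin n))
        (fun b : Fin (n - 1) => (⟨(b : ℕ) + 1, by have := b.isLt; omega⟩ : Fin n))).det).natDegree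
        = (n - 1) ^ 2 ∧
      (((pathSigma n).submatrix
        (fun a : Fin (n - 1) => (⟨(a : ℕ), by have := a.isLt; omega⟩ : Fin n))
        (fun b : Fin (n - 1) => (⟨(b : ℕ) + 1, by have := b.isLt; omega⟩ : Fin n))).det).leadingCoeff
        = 1 ∧
      ((pathSigma n).submatrix
        (fun a : Fin (n - 1) => (⟨(a : ℕ), by have := a.isLt; omega⟩ : Fin n))
        (fun b : Fin (n - 1) => (⟨(b : ℕ) + 1, by have := b.isLt; omega⟩ : Fin n))).det ≠ 0 ∧
      {ζ : ℝ | (((pathSigma n).submatrix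
        (fun a : Fin (n - 1) => (⟨(a : ℕ), by have := a.isLt; omega⟩ : Fin n))
        (fun b : Fin (n - 1) => (⟨(b : ℕ) + 1, by have := b.isLt; omega⟩ : Fin n))).det).eval ζ
          = 0}.Finite := by
  set M := (pathSigma n).submatrix
    (fun a : Fin (n - 1) => (⟨(a : ℕ), by have := a.isLt; omega⟩ : Fin n))
    (fun b : Fin (n - 1) => (⟨(b : ℕ) + 1, by have := b.isLt; omega⟩ : Fin n))
  have hdeg : ∀ a b, (M a b).natDegree ≤ (a : ℕ) + ((b : ℕ) + 1) := fun a b =>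
    natDegree_pathSigma_apply_le n _ _
  have hcoeff : ∀ a b, (M a b).coeff ((a : ℕ) + ((b : ℕ) + 1))
      = (((a + b + 1 : ℕ).choose a : ℕ) : ℝ) := fun a b =>
    coeff_pathSigma_apply n _ _
  have hdet : (of fun a b => (M a b).coeff ((a : ℕ) + ((b : ℕ) + 1))).det = 1 := by
    simpa only [hcoeff] using det_choose_add_add_eq_one ℝ (n - 1) 1
  have hdet_ne : (of fun a b => (M a b).coeff ((a : ℕ) + ((b : ℕ) + 1))).det ≠ 0 :=
    hdet ▸ one_ne_zero
  have hlc : M.det.leadingCoeff = 1 :=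
    (leadingCoeff_det_eq_of_natDegree_le hdeg hdet_ne).trans hdet
  have hne : M.det ≠ 0 := leadingCoeff_ne_zero.mp (hlc ▸ one_ne_zero)
  refine ⟨?_, hlc, hne, finite_setOfPred_isRoot hne⟩
  rw [natDegree_det_eq_of_natDegree_le hdeg hdet_ne, Fin.sum_univ_eq_sum_range (·) (n - 1),
    Fin.sum_univ_eq_sum_range (· + 1) (n - 1), sum_range_add_sum_range_succ_eq_sq]
end
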